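/- arXiv:2507.09605 — 4 statements merged into one kernel-verified Lean document; each statement's English description precedes it below -/
import Mathlib

section
/- Let A_1, ..., A_N be finite sets with |A_i ∩ A_j| ≤ 1 for all i ≠ j, and suppose min_i |A_i| ≥ C·N for some real C ≥ 1. Then |⋃_{i=1}^N A_i| ≥ (1 − 1/(2C)) · ∑_{i=1}^N |A_i|. -/
/-!
Adding the sets one at a time, a new set meets the union of the previous `k` sets in at most
`k` points, so `∑ |A_i| ≤ |⋃ A_i| + N(N-1)/2`. Since `∑ |A_i| ≥ C N²`, the error term
`N(N-1)/2 < N²/2` is at most `∑ |A_i| / (2C)`.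
-/

open Finset

namespace Finset

variable {ι α : Type*} [DecidableEq α]

lemma card_inter_biUnion_le_card {s : Finset ι} {A : ι → Finset α} {t : Finset α}
    (h : ∀ i ∈ s, #(t ∩ A i) ≤ 1) : #(t ∩ s.biUnion A) ≤ #s := by
  rw [inter_biUnion]
  calc #(s.biUnion fun i ↦ t ∩ A i) ≤ ∑ i ∈ s, #(t ∩ A i) := card_biUnion_le
    _ ≤ ∑ _i ∈ s, 1 := sum_le_sum h
    _ = #s := card_eq_sum_ones s |>.symm

lemma sum_card_le_card_biUnion_add_choose_two [DecidableEq ι] (s : Finset ι) {A : ι → Finset α}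
    (h : ∀ i ∈ s, ∀ j ∈ s, i ≠ j → #(A i ∩ A j) ≤ 1) :
    ∑ i ∈ s, #(A i) ≤ #(s.biUnion A) + (#s).choose 2 := by
  induction s using Finset.induction_on with
  | empty => simp
  | @insert a s ha ih =>
    have hs : ∀ i ∈ s, ∀ j ∈ s, i ≠ j → #(A i ∩ A j) ≤ 1 := fun i hi j hj ↦
      h i (mem_insert_of_mem hi) j (mem_insert_of_mem hj)
    have hinter : #(A a ∩ s.biUnion A) ≤ #s := card_inter_biUnion_le_card fun i hi ↦
      h a (mem_insert_self a s) i (mem_insert_of_mem hi) (ne_of_mem_of_not_mem hi ha).symm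
    have hunion := card_union_add_card_inter (A a) (s.biUnion A)
    have hchoose : (#s + 1).choose 2 = #s + (#s).choose 2 := by
      rw [Nat.choose_succ_succ', Nat.choose_one_right]
    rw [sum_insert ha, biUnion_insert, card_insert_of_notMem ha, hchoose]
    have := ih hs
    omega

end Finset

theorem stmt_1 {α : Type*} [DecidableEq α] {N : ℕ} (A : Fin N → Finset α) (C : ℝ)
    (hC : 1 ≤ C)
    (h : ∀ i j : Fin N, i ≠ j → ((A i) ∩ (A j)).card ≤ 1)
    (hmin : ∀ i : Fin N, C * N ≤ ((A i).card : ℝ)) :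
    ((Finset.univ.biUnion A).card : ℝ) ≥
      (1 - 1 / (2 * C)) * ∑ i, ((A i).card : ℝ) := by
  set S := ∑ i, ((A i).card : ℝ)
  have hbonf : S ≤ #(univ.biUnion A) + N * (N - 1) / 2 := by
    have := sum_card_le_card_biUnion_add_choose_two univ fun i _ j _ ↦ h i j
    rw [card_univ, Fintype.card_fin] at this
    have := (Nat.cast_le (α := ℝ)).mpr this
    push_cast [Nat.cast_choose_two] at this
    exact this
  have hS : C * N * N ≤ S := by
    simpa [mul_comm] using sum_le_sum fun i (_ : i ∈ univ) ↦ hmin i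
  have hCpos : 0 < C := by linarith
  have herror : N * (N - 1) / 2 ≤ S / (2 * C) := by
    rw [le_div_iff₀ (by positivity)]
    nlinarith [N.cast_nonneg (α := ℝ)]
  rw [ge_iff_le, sub_mul, one_mul, div_mul_eq_mul_div, one_mul]
  linarith
end

section
/- Let L be a finite set of lines in F_q^n and X ⊆ F_q^n with |l ∩ X| ≥ q/200 for each l ∈ L, X nonempty. Then there exists a line l₀ ∈ L such that the number of lines l ∈ L \ {l₀} that intersect l₀ is at least (1/200²)·q²·|L|/|X| − q. -/
def IsLine (F : Type*) [Field F] {n : ℕ} (l : Set (Fin n → F)) : Prop :=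
  ∃ a v : Fin n → F, v ≠ 0 ∧ l = {x | ∃ t : F, x = a + t • v}

/-!
Count the triples `(l, l', p)` with `l, l' ∈ L` and `p ∈ l ∩ l' ∩ X`. Grouped by `p`, there are
`∑ₚ d(p)²` of them, where `d(p)` is the number of lines of `L` through `p`; by Cauchy–Schwarz this
is at least `I² / |X|`, where `I = ∑ₚ d(p) ≥ q |L| / 200` is the number of incidences. Hence some
line `l₀` is the first entry of at least `q² |L| / (200² |X|)` triples. Since two distinct lines
meet in at most one point, each `l' ≠ l₀` contributes at most one triple with first entry `l₀`,
and only if it meets `l₀`, while `l' = l₀` contributes `|l₀ ∩ X| ≤ q`.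
-/

open Finset

section Lines

variable {F : Type*} [Field F] {n : ℕ}

theorem IsLine.eq_setOf_of_mem {l : Set (Fin n → F)} (hl : IsLine F l) {p q : Fin n → F}
    (hp : p ∈ l) (hq : q ∈ l) (hpq : p ≠ q) :
    l = {x | ∃ t : F, x = p + t • (q - p)} := by
  obtain ⟨a, v, -, rfl⟩ := hl
  obtain ⟨s, rfl⟩ := hp
  obtain ⟨u, rfl⟩ := hq
  have hqp : a + u • v - (a + s • v) = (u - s) • v := by rw [sub_smul]; abel
  have hus : u - s ≠ 0 := fun h => hpq (by rw [sub_eq_zero.mp h])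
  ext x
  simp only [Set.mem_ofPred_eq, hqp]
  constructor
  · rintro ⟨t, rfl⟩
    refine ⟨(t - s) / (u - s), ?_⟩
    rw [smul_smul, div_mul_cancel₀ _ hus, sub_smul]
    abel
  · rintro ⟨t, rfl⟩
    refine ⟨s + t * (u - s), ?_⟩
    rw [add_smul, mul_smul]
    abel

theorem IsLine.inter_subsingleton {l l' : Set (Fin n → F)} (hl : IsLine F l)
    (hl' : IsLine F l') (hne : l ≠ l') : (l ∩ l').Subsingleton := by
  intro p hp q hq
  by_contra hpq
  exact hne ((hl.eq_setOf_of_mem hp.1 hq.1 hpq).trans (hl'.eq_setOf_of_mem hp.2 hq.2 hpq).symm)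

theorem IsLine.ncard_eq [Fintype F] {l : Set (Fin n → F)} (hl : IsLine F l) :
    l.ncard = Fintype.card F := by
  obtain ⟨a, v, hv, rfl⟩ := hl
  have hrange : {x | ∃ t : F, x = a + t • v} = Set.range (fun t : F => a + t • v) := by
    ext x
    simp [eq_comm]
  have hinj : Function.Injective (fun t : F => a + t • v) :=
    (add_right_injective a).comp (smul_left_injective F hv)
  rw [hrange, Set.ncard_range_of_injective hinj, Nat.card_eq_fintype_card]

end Lines

section Incidences

open Classical

variable {α : Type*} (L : Finset (Set α)) (X : Finset α)

noncomputable def pointDegree (p : α) : ℕ := #{l ∈ L | p ∈ l}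

/-- The number of triples `(l, l', p)` with `l' ∈ L` and `p ∈ l ∩ l' ∩ X`. -/
noncomputable def tripleCount (l : Set α) : ℕ := ∑ p ∈ X with p ∈ l, pointDegree L p

theorem ncard_inter_coe_finset (l : Set α) : (l ∩ ↑X).ncard = #{p ∈ X | p ∈ l} := by
  rw [← Set.ncard_coe_finset, coe_filter]
  congr 1
  ext p
  simp [and_comm]

theorem sum_card_filter_mem_eq_sum_pointDegree :
    ∑ l ∈ L, #{p ∈ X | p ∈ l} = ∑ p ∈ X, pointDegree L p :=
  sum_card_bipartiteAbove_eq_sum_card_bipartiteBelow (fun l p => p ∈ l)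

theorem sum_tripleCount : ∑ l ∈ L, tripleCount L X l = ∑ p ∈ X, pointDegree L p ^ 2 := by
  calc ∑ l ∈ L, tripleCount L X l
      = ∑ p ∈ X, ∑ l ∈ L, if p ∈ l then pointDegree L p else 0 := by
        simp only [tripleCount, sum_filter]
        exact sum_comm
    _ = ∑ p ∈ X, pointDegree L p ^ 2 := by
        refine sum_congr rfl fun p _ => ?_
        rw [← sum_filter, sum_const, smul_eq_mul, sq, pointDegree]

theorem tripleCount_eq_sum_card (l : Set α) :
    tripleCount L X l = ∑ l' ∈ L, #{p ∈ X | p ∈ l ∧ p ∈ l'} := by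
  calc tripleCount L X l
      = ∑ p ∈ X with p ∈ l, #(bipartiteAbove (fun p l' => p ∈ l') L p) := rfl
    _ = ∑ l' ∈ L, #{p ∈ X | p ∈ l ∧ p ∈ l'} := by
        rw [sum_card_bipartiteAbove_eq_sum_card_bipartiteBelow]
        simp only [bipartiteBelow, filter_filter]

theorem tripleCount_le (hL : (L : Set (Set α)).Pairwise fun l l' => (l ∩ l').Subsingleton)
    {l : Set α} (hl : l ∈ L) :
    tripleCount L X l ≤ #{p ∈ X | p ∈ l} + {l' | l' ∈ L ∧ l' ≠ l ∧ (l' ∩ l).Nonempty}.ncard := by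
  have hmeet : {l' | l' ∈ L ∧ l' ≠ l ∧ (l' ∩ l).Nonempty}.ncard
      = ∑ l' ∈ L.erase l, if (l' ∩ l).Nonempty then 1 else 0 := by
    rw [← card_filter, ← Set.ncard_coe_finset, coe_filter]
    congr 1
    ext l'
    simp only [Set.mem_ofPred_eq, mem_erase]
    tauto
  rw [tripleCount_eq_sum_card, ← add_sum_erase L _ hl, hmeet]
  refine add_le_add (by simp only [and_self, le_refl]) (sum_le_sum fun l' hl' => ?_)
  obtain ⟨hne, hl'⟩ := mem_erase.mp hl'
  split_ifs with h
  · refine card_le_one.mpr fun p hp p' hp' => ?_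
    simp only [mem_filter] at hp hp'
    exact hL hl hl' hne.symm ⟨hp.2.1, hp.2.2⟩ ⟨hp'.2.1, hp'.2.2⟩
  · refine (card_eq_zero.mpr (filter_eq_empty_iff.mpr ?_)).le
    rintro p - ⟨hpl, hpl'⟩
    exact h ⟨p, hpl', hpl⟩

theorem exists_sq_sum_pointDegree_le (hL : L.Nonempty) :
    ∃ l₀ ∈ L, (∑ p ∈ X, pointDegree L p) ^ 2 ≤ #X * (#L * tripleCount L X l₀) := by
  obtain ⟨l₀, hl₀, hmax⟩ := L.exists_max_image (tripleCount L X) hL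
  refine ⟨l₀, hl₀, sq_sum_le_card_mul_sum_sq.trans (Nat.mul_le_mul_left _ ?_)⟩
  rw [← sum_tripleCount]
  exact sum_le_card_nsmul L _ _ hmax

end Incidences

theorem stmt_9_general {F : Type*} [Field F] [Fintype F] {n : ℕ}
    (L : Finset (Set (Fin n → F))) (hLne : L.Nonempty)
    (hL : ∀ l ∈ L, IsLine F l)
    (X : Set (Fin n → F))
    (hinc : ∀ l ∈ L, (Fintype.card F : ℝ) / 200 ≤ ((l ∩ X).ncard : ℝ)) :
    ∃ l₀ ∈ L,
      (1 / 200 ^ 2) * (Fintype.card F : ℝ) ^ 2 * L.card / (X.ncard : ℝ)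
          - (Fintype.card F : ℝ) ≤
        (({l | l ∈ L ∧ l ≠ l₀ ∧ (l ∩ l₀).Nonempty}).ncard : ℝ) := by
  classical
  obtain ⟨X, rfl⟩ := X.toFinite.exists_finset_coe
  obtain ⟨l₀, hl₀, hsq⟩ := exists_sq_sum_pointDegree_le L X hLne
  refine ⟨l₀, hl₀, ?_⟩
  have hl₀X : #{p ∈ X | p ∈ l₀} ≤ Fintype.card F := by
    rw [← ncard_inter_coe_finset, ← (hL l₀ hl₀).ncard_eq]
    exact Set.ncard_le_ncard Set.inter_subset_left l₀.toFinite
  have htriples : (tripleCount L X l₀ : ℝ) ≤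
      Fintype.card F + {l | l ∈ L ∧ l ≠ l₀ ∧ (l ∩ l₀).Nonempty}.ncard := by
    have hpairwise := fun l hl l' hl' hne => (hL l hl).inter_subsingleton (hL l' hl') hne
    exact_mod_cast (tripleCount_le L X hpairwise hl₀).trans (Nat.add_le_add_right hl₀X _)
  have hincidences : #L • ((Fintype.card F : ℝ) / 200) ≤ ∑ p ∈ X, (pointDegree L p : ℝ) := by
    rw [← Nat.cast_sum, ← sum_card_filter_mem_eq_sum_pointDegree, Nat.cast_sum]
    exact card_nsmul_le_sum _ _ _ fun l hl => ncard_inter_coe_finset X l ▸ hinc l hl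
  set q : ℝ := (Fintype.card F : ℝ)
  set N : ℝ := (({l | l ∈ L ∧ l ≠ l₀ ∧ (l ∩ l₀).Nonempty}.ncard : ℕ) : ℝ)
  have hLpos : (0 : ℝ) < #L := by exact_mod_cast hLne.card_pos
  have hkey : ((#L : ℝ) * (q / 200)) ^ 2 ≤ #X * (#L * (q + N)) :=
    calc ((#L : ℝ) * (q / 200)) ^ 2 ≤ (∑ p ∈ X, (pointDegree L p : ℝ)) ^ 2 := by
          rw [← nsmul_eq_mul]
          exact pow_le_pow_left₀ (by positivity) hincidences 2
      _ ≤ (#X : ℝ) * (#L * tripleCount L X l₀) := by exact_mod_cast hsq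
      _ ≤ #X * (#L * (q + N)) := by gcongr
  rw [Set.ncard_coe_finset, sub_le_iff_le_add]
  refine div_le_of_le_mul₀ (by positivity) (by positivity) ?_
  nlinarith [hkey, hLpos]

theorem stmt_9 {F : Type*} [Field F] [Fintype F] {n : ℕ}
    (L : Finset (Set (Fin n → F))) (hLne : L.Nonempty)
    (hL : ∀ l ∈ L, IsLine F l)
    (X : Set (Fin n → F)) (hX : X.Nonempty)
    (hinc : ∀ l ∈ L, (Fintype.card F : ℝ) / 200 ≤ ((l ∩ X).ncard : ℝ)) :
    ∃ l₀ ∈ L,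
      (1 / 200 ^ 2) * (Fintype.card F : ℝ) ^ 2 * L.card / (X.ncard : ℝ)
          - (Fintype.card F : ℝ) ≤
        (({l | l ∈ L ∧ l ≠ l₀ ∧ (l ∩ l₀).Nonempty}).ncard : ℝ) :=
  stmt_9_general L hLne hL X hinc
end

section
/- If K ⊆ F_q^3 is a Kakeya set, then |K| ≥ c·q^{5/2} for some constant c > 0 independent of q. -/
def IsKakeya (F : Type*) [Field F] {n : ℕ} (K : Set (Fin n → F)) : Prop :=
  ∀ v : Fin n → F, v ≠ 0 → ∃ a : Fin n → F, {x | ∃ t : F, x = a + t • v} ⊆ K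

open MvPolynomial

/-- Coefficient of a product of polynomials at the sum of degree bounds. -/
lemma coeff_prod_of_natDegree_le' {R : Type*} [CommSemiring R] {ι : Type*} (s : Finset ι)
    (f : ι → Polynomial R) (n : ι → ℕ) (h : ∀ i ∈ s, (f i).natDegree ≤ n i) :
    (∏ i ∈ s, f i).coeff (∑ i ∈ s, n i) = ∏ i ∈ s, (f i).coeff (n i) := by
  classical
  induction s using Finset.cons_induction with
  | empty => simp
  | cons a s ha ih =>
    rw [Finset.prod_cons, Finset.sum_cons,
      Polynomial.coeff_mul_add_eq_of_natDegree_le (h a (Finset.mem_cons_self a s))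
        ((Polynomial.natDegree_prod_le _ _).trans
          (Finset.sum_le_sum fun i hi => h i (Finset.mem_cons_of_mem hi))),
      ih fun i hi => h i (Finset.mem_cons_of_mem hi), Finset.prod_cons]

section Dvir

variable {F : Type} [Field F] [Fintype F]

/-- Dvir's vanishing lemma: a polynomial of degree `< q` vanishing on a Kakeya set is zero. -/
lemma dvir_vanish {K : Set (Fin 3 → F)} (hK : IsKakeya F K)
    (p : MvPolynomial (Fin 3) F) (hdeg : p.totalDegree < Fintype.card F)
    (hvan : ∀ x ∈ K, MvPolynomial.eval x p = 0) : p = 0 := by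
  classical
  by_contra hp
  -- K is nonempty
  have hone : ((fun _ => 1 : Fin 3 → F)) ≠ 0 := by
    intro h
    exact one_ne_zero (congrFun h 0)
  obtain ⟨a0, ha0⟩ := hK _ hone
  have ha0K : a0 ∈ K := ha0 ⟨0, by simp⟩
  set D := p.totalDegree with hD
  -- D ≥ 1
  rcases Nat.eq_zero_or_pos D with hD0 | hD1
  · -- p is a constant, vanishing at a point of K, so zero
    have hsum := MvPolynomial.sum_homogeneousComponent p
    rw [← hD, hD0] at hsum
    simp only [zero_add, Finset.range_one, Finset.sum_singleton,
      MvPolynomial.homogeneousComponent_zero] at hsum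
    have : MvPolynomial.eval a0 p = MvPolynomial.coeff 0 p := by
      rw [← hsum]; simp
    rw [hvan a0 ha0K] at this
    apply hp
    rw [← hsum, ← this]; simp
  -- the top homogeneous component
  set h := MvPolynomial.homogeneousComponent D p with hh
  have hne : h ≠ 0 := by
    obtain ⟨m, hm, hmd⟩ := p.support.exists_mem_eq_sup
      (MvPolynomial.support_nonempty.mpr hp) fun s : Fin 3 →₀ ℕ => s.sum fun _ e => e
    have hdm : m.degree = D := by
      rw [Finsupp.degree, hD, MvPolynomial.totalDegree, hmd]
      rfl
    intro h0
    have := MvPolynomial.coeff_homogeneousComponent (σ := Fin 3) (R := F) D p m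
    rw [← hh, h0, if_pos hdm] at this
    exact (MvPolynomial.mem_support_iff.mp hm) this.symm
  -- h vanishes everywhere
  have hall : ∀ v : Fin 3 → F, MvPolynomial.eval v h = 0 := by
    intro v
    rcases eq_or_ne v 0 with rfl | hv
    · -- at 0, a homogeneous component of positive degree vanishes
      have : MvPolynomial.eval (0 : Fin 3 → F) h = MvPolynomial.coeff 0 h := by
        rw [MvPolynomial.eval_zero]; rfl
      rw [this, hh, MvPolynomial.coeff_homogeneousComponent, if_neg]
      simp only [map_zero]
      omega
    · obtain ⟨a, hline⟩ := hK v hv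
      set g : Fin 3 → Polynomial F :=
        fun i => Polynomial.C (a i) + Polynomial.X * Polynomial.C (v i) with hg
      have hgdeg : ∀ i, (g i).natDegree ≤ 1 := by
        intro i
        apply Polynomial.natDegree_add_le_of_degree_le
        · simp
        · calc (Polynomial.X * Polynomial.C (v i)).natDegree
              ≤ _ := Polynomial.natDegree_mul_le
          _ ≤ 1 := by simp
      have hgcoeff : ∀ i, (g i).coeff 1 = v i := by
        intro i
        simp [hg, Polynomial.coeff_C]
      set Q : Polynomial F := MvPolynomial.eval₂ Polynomial.C g p with hQ
      -- evaluation along the line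
      have heval : ∀ t : F, Q.eval t = MvPolynomial.eval (a + t • v) p := by
        intro t
        have := MvPolynomial.eval₂_comp_left (Polynomial.evalRingHom t) Polynomial.C g p
        rw [← hQ] at this
        simp only [Polynomial.coe_evalRingHom] at this
        rw [this]
        have h1 : (Polynomial.evalRingHom t).comp Polynomial.C = RingHom.id F := by
          ext x; simp
        have h2 : (Polynomial.eval t) ∘ g = a + t • v := by
          funext i
          simp only [hg, Function.comp_apply, Polynomial.eval_add, Polynomial.eval_mul, Polynomial.eval_C, Polynomial.eval_X, Pi.add_apply, Pi.smul_apply, smul_eq_mul]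
        rw [h1, h2]
        rfl
      -- Q as a sum over the support of p
      have hQsum : Q = ∑ d ∈ p.support,
          Polynomial.C (MvPolynomial.coeff d p) * ∏ i ∈ d.support, g i ^ d i := by
        rw [hQ, MvPolynomial.eval₂_eq]
      -- degree bound on each term
      have hterm : ∀ d ∈ p.support,
          (Polynomial.C (MvPolynomial.coeff d p) * ∏ i ∈ d.support, g i ^ d i).natDegree
            ≤ d.sum fun _ e => e := by
        intro d _
        calc (Polynomial.C (MvPolynomial.coeff d p) * ∏ i ∈ d.support, g i ^ d i).natDegree
            ≤ (Polynomial.C (MvPolynomial.coeff d p)).natDegree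
              + (∏ i ∈ d.support, g i ^ d i).natDegree := Polynomial.natDegree_mul_le
          _ = (∏ i ∈ d.support, g i ^ d i).natDegree := by simp
          _ ≤ ∑ i ∈ d.support, (g i ^ d i).natDegree := Polynomial.natDegree_prod_le _ _
          _ ≤ ∑ i ∈ d.support, d i := by
              refine Finset.sum_le_sum fun i _ => ?_
              calc (g i ^ d i).natDegree ≤ d i * (g i).natDegree :=
                    Polynomial.natDegree_pow_le
                _ ≤ d i * 1 := Nat.mul_le_mul_left _ (hgdeg i)
                _ = d i := Nat.mul_one _
          _ = d.sum fun _ e => e := rfl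
      have hQdeg : Q.natDegree ≤ D := by
        rw [hQsum]
        refine Polynomial.natDegree_sum_le_of_forall_le _ _ fun d hd => ?_
        exact (hterm d hd).trans (MvPolynomial.le_totalDegree hd)
      -- Q vanishes everywhere hence is zero
      have hQ0 : Q = 0 := by
        refine Polynomial.eq_zero_of_natDegree_lt_card_of_eval_eq_zero Q
          Function.injective_id (fun t => ?_) ?_
        · rw [heval]
          exact hvan _ (hline ⟨t, rfl⟩)
        · exact lt_of_le_of_lt hQdeg (by simpa using hdeg)
      -- the top coefficient of Q equals eval v h
      have hcoeff : Q.coeff D = MvPolynomial.eval v h := by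
        rw [hQsum, Polynomial.finset_sum_coeff]
        have hsplit : ∀ d ∈ p.support,
            (Polynomial.C (MvPolynomial.coeff d p) * ∏ i ∈ d.support, g i ^ d i).coeff D
              = if d.degree = D then
                  MvPolynomial.coeff d p * ∏ i ∈ d.support, v i ^ d i else 0 := by
          intro d hd
          rcases eq_or_ne d.degree D with hdD | hdD
          · rw [if_pos hdD, Polynomial.coeff_C_mul]
            congr 1
            have hDs : D = ∑ i ∈ d.support, d i := by
              rw [← hdD, Finsupp.degree]; rfl
            rw [hDs, coeff_prod_of_natDegree_le' _ _ _ (fun i _ => by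
              calc (g i ^ d i).natDegree ≤ d i * (g i).natDegree :=
                    Polynomial.natDegree_pow_le
                _ ≤ d i * 1 := Nat.mul_le_mul_left _ (hgdeg i)
                _ = d i := Nat.mul_one _)]
            refine Finset.prod_congr rfl fun i _ => ?_
            have := Polynomial.coeff_pow_of_natDegree_le (p := g i) (n := 1) (m := d i) (hgdeg i)
            rw [Nat.mul_one] at this
            rw [this, hgcoeff]
          · rw [if_neg hdD]
            apply Polynomial.coeff_eq_zero_of_natDegree_lt
            refine lt_of_le_of_lt (hterm d hd) ?_
            have h1 : (d.sum fun _ e => e) = d.degree := rfl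
            have h2 : (d.sum fun _ e => e) ≤ D := MvPolynomial.le_totalDegree hd
            omega
        rw [Finset.sum_congr rfl hsplit, Finset.sum_ite, Finset.sum_const_zero, add_zero]
        rw [hh, MvPolynomial.homogeneousComponent_apply, map_sum]
        rw [Finset.sum_filter, Finset.sum_filter]
        refine Finset.sum_congr rfl fun d _ => ?_
        split
        · rw [MvPolynomial.eval_monomial]
          rfl
        · rfl
      rw [← hcoeff, hQ0, Polynomial.coeff_zero]
  -- a nonzero homogeneous polynomial of degree ≤ q cannot vanish everywhere
  apply hne
  refine (MvPolynomial.homogeneousComponent_isHomogeneous D p).eq_zero_of_forall_eval_eq_zero_of_le_card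
    hall ?_
  rw [Cardinal.mk_fintype]
  exact_mod_cast hdeg.le

/-- The counting consequence: `q ^ 3 ≤ 27 * |K|`. -/
lemma dvir_count {K : Set (Fin 3 → F)} (hK : IsKakeya F K) :
    Fintype.card F ^ 3 ≤ 27 * K.ncard := by
  classical
  set q := Fintype.card F with hq
  have hq2 : 2 ≤ q := Fintype.one_lt_card
  set m := (q + 2) / 3 with hm
  have hm1 : 1 ≤ m := by omega
  have h3m : q ≤ 3 * m := by omega
  have hm3 : 3 * (m - 1) ≤ q - 1 := by omega
  haveI : Fintype ↥K := K.toFinite.fintype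
  -- the exponent map
  set tf : (Fin 3 → Fin m) → (Fin 3 →₀ ℕ) :=
    fun f => Finsupp.equivFunOnFinite.symm fun i => (f i : ℕ) with htf
  have htf_inj : Function.Injective tf := by
    intro f g hfg
    have h2 := Finsupp.equivFunOnFinite.symm.injective hfg
    funext i
    exact Fin.ext (congrFun h2 i)
  have htf_sum : ∀ f : Fin 3 → Fin m, ((tf f).sum fun _ e => e) ≤ q - 1 := by
    intro f
    rw [Finsupp.sum_fintype _ _ (fun _ => rfl)]
    calc (∑ i : Fin 3, ((f i : ℕ))) ≤ ∑ _i : Fin 3, (m - 1) :=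
          Finset.sum_le_sum fun i _ => by omega
      _ = 3 * (m - 1) := by simp [Finset.sum_const, mul_comm]
      _ ≤ q - 1 := hm3
  -- the evaluation family
  set e : (Fin 3 → Fin m) → (↥K → F) :=
    fun f x => MvPolynomial.eval (x : Fin 3 → F) (MvPolynomial.monomial (tf f) (1 : F)) with he
  have hli : LinearIndependent F e := by
    rw [Fintype.linearIndependent_iff]
    intro c hc f
    set p : MvPolynomial (Fin 3) F :=
      ∑ g : Fin 3 → Fin m, c g • MvPolynomial.monomial (tf g) (1 : F) with hp
    have hpdeg : p.totalDegree < q := by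
      refine lt_of_le_of_lt (MvPolynomial.totalDegree_finset_sum _ _) ?_
      refine lt_of_le_of_lt (Finset.sup_le fun g _ => ?_) (show q - 1 < q by omega)
      calc (c g • MvPolynomial.monomial (tf g) (1 : F)).totalDegree
          = (MvPolynomial.monomial (tf g) (c g)).totalDegree := by
            rw [MvPolynomial.smul_monomial, smul_eq_mul, mul_one]
        _ ≤ (tf g).sum fun _ e => e := MvPolynomial.totalDegree_monomial_le _ _
        _ ≤ q - 1 := htf_sum g
    have hpvan : ∀ x ∈ K, MvPolynomial.eval x p = 0 := by
      intro x hx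
      have := congrFun hc ⟨x, hx⟩
      simpa [hp, he, map_sum] using this
    have hp0 : p = 0 := dvir_vanish hK p hpdeg hpvan
    have : MvPolynomial.coeff (tf f) p = c f := by
      rw [hp, MvPolynomial.coeff_sum]
      rw [Finset.sum_eq_single f]
      · simp
      · intro g _ hgf
        rw [MvPolynomial.coeff_smul, MvPolynomial.coeff_monomial,
          if_neg (fun hh => hgf (htf_inj hh)), smul_zero]
      · intro hf; exact absurd (Finset.mem_univ f) hf
    rw [hp0, MvPolynomial.coeff_zero] at this
    exact this.symm
  have hcard : Fintype.card (Fin 3 → Fin m) ≤ Fintype.card ↥K := by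
    have := hli.fintype_card_le_finrank
    rwa [Module.finrank_fintype_fun_eq_card] at this
  have hKcard : K.ncard = Fintype.card ↥K := K.ncard_eq_toFinset_card'.trans (by simp)
  have hmq : m ^ 3 ≤ K.ncard := by
    rw [hKcard]
    calc m ^ 3 = Fintype.card (Fin 3 → Fin m) := by simp [Fintype.card_fun]
      _ ≤ _ := hcard
  calc q ^ 3 ≤ (3 * m) ^ 3 := Nat.pow_le_pow_left h3m 3
    _ = 27 * m ^ 3 := by ring
    _ ≤ 27 * K.ncard := Nat.mul_le_mul_left _ hmq

end Dvir

theorem stmt_13 :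
    ∃ c : ℝ, 0 < c ∧
      ∀ (F : Type) [Field F] [Fintype F] (K : Set (Fin 3 → F)),
        IsKakeya F K →
        c * (Fintype.card F : ℝ) ^ ((5 : ℝ) / 2) ≤ (K.ncard : ℝ) := by
  refine ⟨1 / 27, by norm_num, ?_⟩
  intro F _ _ K hK
  have hcount := dvir_count hK
  set q := Fintype.card F with hq
  have hq2 : 2 ≤ q := Fintype.one_lt_card
  have h1 : (1 : ℝ) ≤ (q : ℝ) := by exact_mod_cast le_trans (by norm_num) hq2
  have hrpow : (q : ℝ) ^ ((5 : ℝ) / 2) ≤ (q : ℝ) ^ (3 : ℝ) :=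
    Real.rpow_le_rpow_of_exponent_le h1 (by norm_num)
  have hfin : (q : ℝ) ^ (3 : ℝ) ≤ 27 * (K.ncard : ℝ) := by
    have h2 : ((q : ℝ)) ^ (3 : ℕ) ≤ 27 * (K.ncard : ℝ) := by exact_mod_cast hcount
    rw [show (3 : ℝ) = ((3 : ℕ) : ℝ) by norm_num, Real.rpow_natCast]
    exact h2
  calc (1 / 27 : ℝ) * (q : ℝ) ^ ((5 : ℝ) / 2)
      ≤ (1 / 27) * ((q : ℝ) ^ (3 : ℝ)) := by nlinarith
    _ ≤ (1 / 27) * (27 * (K.ncard : ℝ)) := by nlinarith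
    _ = (K.ncard : ℝ) := by ring
end

section
/- Let Π be a 2-plane in F_q^n and p a point not in Π. Let l₁ ≠ l₂ be two lines through p, each of which either meets Π or is parallel to Π (i.e., has direction vector in the direction space of Π). Let Π_p be the 2-plane spanned by l₁ and l₂. Then any line l₃ through p contained in Π_p also meets Π or is parallel to Π. -/
/-!
With `x = p - a ∉ W`, the line `p + F v` meets the plane `a + W` or is parallel to it exactly
when `v ∈ W ⊔ F ∙ x`, the direction space of the 3-space spanned by the plane and `p`.
Being a membership in a subspace, this condition passes from `v₁, v₂` to every `v₃` in their span.
-/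

namespace Submodule

variable {K M : Type*} [Field K] [AddCommGroup M] [Module K M]

def LineMeetsOrParallel (W : Submodule K M) (a p v : M) : Prop :=
  (∃ t : K, p + t • v - a ∈ W) ∨ v ∈ W

theorem lineMeetsOrParallel_iff_mem_sup_span_singleton {W : Submodule K M} {a p : M}
    (hp : p - a ∉ W) (v : M) :
    LineMeetsOrParallel W a p v ↔ v ∈ W ⊔ K ∙ (p - a) := by
  constructor
  · rintro (⟨t, ht⟩ | hv)
    · have ht₀ : t ≠ 0 := by
        rintro rfl
        exact hp (by simpa using ht)
      have hv : v = t⁻¹ • (p + t • v - a) - t⁻¹ • (p - a) := by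
        match_scalars <;> field_simp <;> ring
      rw [hv]
      exact sub_mem (mem_sup_left (smul_mem _ _ ht))
        (mem_sup_right (smul_mem _ _ (mem_span_singleton_self _)))
    · exact mem_sup_left hv
  · intro hv
    obtain ⟨w, hw, y, hy, rfl⟩ := mem_sup.1 hv
    obtain ⟨s, rfl⟩ := mem_span_singleton.1 hy
    by_cases hs : s = 0
    · right
      simpa [hs] using hw
    · left
      refine ⟨-s⁻¹, ?_⟩
      have hpoint : p + (-s⁻¹) • (w + s • (p - a)) - a = (-s⁻¹) • w := by
        match_scalars <;> field_simp <;> ring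
      rw [hpoint]
      exact smul_mem _ _ hw

end Submodule

open Submodule in
theorem stmt_17_general {F : Type*} [Field F] {n : ℕ}
    (a p v₁ v₂ v₃ : Fin n → F) (W : Submodule F (Fin n → F))
    (hp : p - a ∉ W)
    (h₁ : (∃ t : F, (p + t • v₁) - a ∈ W) ∨ v₁ ∈ W)
    (h₂ : (∃ t : F, (p + t • v₂) - a ∈ W) ∨ v₂ ∈ W)
    (hv₃mem : v₃ ∈ Submodule.span F ({v₁, v₂} : Set (Fin n → F))) :
    (∃ t : F, (p + t • v₃) - a ∈ W) ∨ v₃ ∈ W := by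
  have hspan : span F {v₁, v₂} ≤ W ⊔ F ∙ (p - a) :=
    span_le.2 <| Set.insert_subset_iff.2
      ⟨(lineMeetsOrParallel_iff_mem_sup_span_singleton hp v₁).1 h₁,
        Set.singleton_subset_iff.2 ((lineMeetsOrParallel_iff_mem_sup_span_singleton hp v₂).1 h₂)⟩
  exact (lineMeetsOrParallel_iff_mem_sup_span_singleton hp v₃).2 (hspan hv₃mem)

/-- Key planebrush separation step. The 2-plane `Π = {x | x - a ∈ W}` with
`dim W = 2`; `p ∉ Π`; `l₁, l₂` are distinct lines through `p` with directions
`v₁, v₂`, each meeting `Π` or parallel to `Π`; `Π_p = p + span{v₁, v₂}` is the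
plane spanned by `l₁` and `l₂`; `l₃` is a line through `p` contained in `Π_p`,
i.e. its direction `v₃` lies in `span{v₁, v₂}`. Then `l₃` meets `Π` or is
parallel to `Π`. -/
theorem stmt_17 {F : Type*} [Field F] [Fintype F] {n : ℕ}
    (a p v₁ v₂ v₃ : Fin n → F) (W : Submodule F (Fin n → F))
    (hW : Module.finrank F W = 2)
    (hp : p - a ∉ W)
    (hv₁ : v₁ ≠ 0) (hv₂ : v₂ ≠ 0) (hv₃ : v₃ ≠ 0)
    (hne : ∀ c : F, v₂ ≠ c • v₁)
    (h₁ : (∃ t : F, (p + t • v₁) - a ∈ W) ∨ v₁ ∈ W)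
    (h₂ : (∃ t : F, (p + t • v₂) - a ∈ W) ∨ v₂ ∈ W)
    (hv₃mem : v₃ ∈ Submodule.span F ({v₁, v₂} : Set (Fin n → F))) :
    (∃ t : F, (p + t • v₃) - a ∈ W) ∨ v₃ ∈ W :=
  stmt_17_general a p v₁ v₂ v₃ W hp h₁ h₂ hv₃mem
end
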